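/- Let φ: Ω → ℝ be measurable and Φ: Ω → X be strongly measurable and first-type Birkhoff integrable with respect to ν, and set N(A) := (Bi₁)∫_A Φ dν for A ∈ 𝒜. For n ≥ 1 put G_n := {ω ∈ Ω : n−1 ≤ |φ(ω)| ≤ n}. Then for every ε > 0 there exist, for each n, countable measurable partitions {U_n^j, j ∈ ℕ} of G_n such that for every finer partitions {V_n^j, j ∈ ℕ} of each G_n and every choice of points ω_n^j ∈ V_n^j one has Σ_n Σ_j ‖Φ(ω_n^j)φ(ω_n^j)ν(V_n^j) − φ(ω_n^j)N(V_n^j)‖ ≤ 2ε. -/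

import Mathlib

open MeasureTheory Filter Set Function

noncomputable section

variable {Ω : Type*} {X : Type*}

/-- A countable measurable partition of a measurable set `G`:
a countable family of pairwise disjoint measurable sets covering `G`
(pieces may be empty, which accounts for finite or countable families). -/
structure CountablePartitionOn [MeasurableSpace Ω] (G : Set Ω) where
  piece : ℕ → Set Ω
  measurable : ∀ n, MeasurableSet (piece n)
  disj : Pairwise (Function.onFun Disjoint piece)
  cover : (⋃ n, piece n) = G

/-- `P` is finer than `P'` if every piece of `P` is contained in some piece of `P'`. -/
def CountablePartitionOn.Finer [MeasurableSpace Ω] {G : Set Ω}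
    (P P' : CountablePartitionOn G) : Prop :=
  ∀ n, ∃ m, P.piece n ⊆ P'.piece m

/-- A choice of tags for a partition: a point in each nonempty piece. -/
def CountablePartitionOn.IsTagging [MeasurableSpace Ω] {G : Set Ω}
    (P : CountablePartitionOn G) (t : ℕ → Ω) : Prop :=
  ∀ n, (P.piece n).Nonempty → t n ∈ P.piece n

/-- Generic Birkhoff-type integral: the Riemann-type sums `∑ term (t k) (U k)`
attached to countable measurable partitions converge to `I` in the Birkhoff sense. -/
def HasBirkhoffSumOn [MeasurableSpace Ω] [NormedAddCommGroup X]
    (term : Ω → Set Ω → X) (G : Set Ω) (I : X) : Prop :=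
  ∀ ε > (0:ℝ), ∃ P : CountablePartitionOn G,
    ∀ P' : CountablePartitionOn G, P'.Finer P → ∀ t : ℕ → Ω, P'.IsTagging t →
      Filter.limsup
        (fun n => ‖(∑ k ∈ Finset.range n, term (t k) (P'.piece k)) - I‖) Filter.atTop < ε

/-- First-type Birkhoff integral of a vector-valued function with respect to a
scalar measure, over the set `A`. -/
def HasBi1On [MeasurableSpace Ω] [NormedAddCommGroup X] [NormedSpace ℝ X]
    (ν : Measure Ω) (Φ : Ω → X) (A : Set Ω) (I : X) : Prop :=
  HasBirkhoffSumOn (fun ω U => (ν U).toReal • Φ ω) A I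

/-- Second-type Birkhoff integral of a scalar function with respect to a
vector-valued set function, over the set `A`. -/
def HasBi2On [MeasurableSpace Ω] [NormedAddCommGroup X] [NormedSpace ℝ X]
    (N : Set Ω → X) (φ : Ω → ℝ) (A : Set Ω) (I : X) : Prop :=
  HasBirkhoffSumOn (fun ω U => φ ω • N U) A I

/-! Since `Φ` has separable range, each `G n` splits into countably many measurable pieces on
which `Φ` oscillates by at most `δ n`. On a piece `V` with tag `t` every Riemann sum of the
Birkhoff integral `N V` lies within `δ n · ν V` of `ν V • Φ t`, hence so does `N V`; as `|φ| ≤ n`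
on `G n`, the `n`-th row of the double sum is at most `n · δ n · ν Ω`. Taking
`δ n = ε 2⁻ⁿ / (n (ν Ω + 1))` makes the row sums geometric, so the total is at most `2ε`. -/

open Finset Topology

namespace CountablePartitionOn

variable [MeasurableSpace Ω] {G : Set Ω}

lemma piece_subset (P : CountablePartitionOn G) (n : ℕ) : P.piece n ⊆ G :=
  (subset_iUnion P.piece n).trans P.cover.subset

def ofCover (C : ℕ → Set Ω) (hC : ∀ n, MeasurableSet (C n)) (hcover : ⋃ n, C n = G) :
    CountablePartitionOn G where
  piece := disjointed C
  measurable := MeasurableSet.disjointed hC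
  disj := disjoint_disjointed C
  cover := by rw [iUnion_disjointed, hcover]

lemma ofCover_piece_subset (C : ℕ → Set Ω) (hC : ∀ n, MeasurableSet (C n))
    (hcover : ⋃ n, C n = G) (n : ℕ) : (ofCover C hC hcover).piece n ⊆ C n :=
  disjointed_subset C n

lemma hasSum_measureReal (ν : Measure Ω) [IsFiniteMeasure ν] (P : CountablePartitionOn G) :
    HasSum (fun k => ν.real (P.piece k)) (ν.real G) := by
  have h := measure_iUnion (μ := ν) P.disj P.measurable
  rw [P.cover] at h
  rw [measureReal_def, h, ENNReal.tsum_toReal_eq fun k => measure_ne_top ν _]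
  exact ENNReal.hasSum_toReal (by rw [← h]; exact measure_ne_top ν G)

lemma exists_isTagging (P : CountablePartitionOn G) (t : Ω) :
    ∃ τ : ℕ → Ω, P.IsTagging τ ∧ ∀ k, τ k ∈ G ∨ τ k = t := by
  classical
  refine ⟨fun k => if h : (P.piece k).Nonempty then h.some else t,
    fun k hk => by simpa [hk] using hk.some_mem, fun k => ?_⟩
  dsimp only
  split_ifs with h
  · exact .inl (P.piece_subset k h.some_mem)
  · exact .inr rfl

lemma exists_forall_dist_le [PseudoMetricSpace X] {Φ : Ω → X}
    (hΦ : StronglyMeasurable Φ) (hG : MeasurableSet G) {δ : ℝ} (hδ : 0 < δ) :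
    ∃ P : CountablePartitionOn G,
      ∀ k, ∀ a ∈ P.piece k, ∀ b ∈ P.piece k, dist (Φ a) (Φ b) ≤ δ := by
  suffices ∃ C : ℕ → Set Ω, (∀ n, MeasurableSet (C n)) ∧ ⋃ n, C n = G ∧
      ∀ n, ∀ a ∈ C n, ∀ b ∈ C n, dist (Φ a) (Φ b) ≤ δ by
    obtain ⟨C, hCm, hC, hosc⟩ := this
    refine ⟨ofCover C hCm hC, fun k a ha b hb => ?_⟩
    exact hosc k a (ofCover_piece_subset C hCm hC k ha) b (ofCover_piece_subset C hCm hC k hb)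
  rcases isEmpty_or_nonempty Ω with _ | _
  · exact ⟨fun _ => G, fun _ => hG, iUnion_const G, fun _ a => isEmptyElim a⟩
  borelize X
  have : TopologicalSpace.SeparableSpace (range Φ) := hΦ.isSeparable_range.separableSpace
  have : Nonempty (range Φ) := (range_nonempty Φ).to_subtype
  obtain ⟨u, hu⟩ := TopologicalSpace.exists_dense_seq (range Φ)
  refine ⟨fun n => G ∩ Φ ⁻¹' Metric.ball (u n : X) (δ / 2),
    fun n => hG.inter (hΦ.measurable Metric.isOpen_ball.measurableSet),
    Subset.antisymm (iUnion_subset fun _ => inter_subset_left) fun ω hω => ?_,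
    fun n a ha b hb => ?_⟩
  · obtain ⟨n, hn⟩ := hu.exists_dist_lt ⟨Φ ω, ω, rfl⟩ (half_pos hδ)
    exact mem_iUnion.2 ⟨n, hω, hn⟩
  · have ha' := Metric.mem_ball.1 ha.2
    have hb' := Metric.mem_ball.1 hb.2
    linarith [dist_triangle_right (Φ a) (Φ b) (u n : X)]

end CountablePartitionOn

lemma norm_sub_le_of_limsup_lt {E : Type*} [SeminormedAddCommGroup E] {S : ℕ → E} {I y : E}
    {b : ℕ → ℝ} {r c : ℝ} (hlim : limsup (fun n => ‖S n - I‖) atTop < c)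
    (hb : Tendsto b atTop (𝓝 0)) (hS : ∀ n, ‖S n - y‖ ≤ r + b n) : ‖I - y‖ ≤ c + r := by
  -- `limsup` in `ℝ` is junk for sequences unbounded above, so boundedness must come from `hS`.
  have hbdd : IsBoundedUnder (· ≤ ·) atTop (fun n => ‖S n - I‖) := by
    obtain ⟨B, hB⟩ := hb.isBoundedUnder_le
    refine ⟨r + B + ‖y - I‖, eventually_map.2 ?_⟩
    filter_upwards [eventually_map.1 hB] with n hn
    linarith [norm_sub_le_norm_sub_add_norm_sub (S n) y I, hS n]
  refine ge_of_tendsto (by simpa using hb.const_add (c + r)) ?_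
  filter_upwards [eventually_lt_of_limsup_lt hlim hbdd] with n hn
  linarith [norm_sub_le_norm_sub_add_norm_sub I (S n) y, norm_sub_rev I (S n), hS n]

lemma HasBi1On.norm_sub_smul_le [NormedAddCommGroup X] [NormedSpace ℝ X]
    [MeasurableSpace Ω] {ν : Measure Ω} [IsFiniteMeasure ν] {Φ : Ω → X} {V : Set Ω} {I : X}
    (hI : HasBi1On ν Φ V I) {t : Ω} {δ : ℝ} (hδ : 0 ≤ δ)
    (hosc : ∀ s ∈ V, dist (Φ s) (Φ t) ≤ δ) :
    ‖I - ν.real V • Φ t‖ ≤ δ * ν.real V := by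
  refine le_of_forall_pos_le_add fun c hc => ?_
  obtain ⟨P, hP⟩ := hI c hc
  obtain ⟨τ, hτ, hτV⟩ := P.exists_isTagging t
  have hτosc : ∀ k, dist (Φ (τ k)) (Φ t) ≤ δ := fun k =>
    (hτV k).elim (hosc _) fun h => h ▸ (dist_self (Φ t)).trans_le hδ
  have hsum := P.hasSum_measureReal ν
  set g := fun k => ν.real (P.piece k)
  have hS : ∀ n, ‖∑ k ∈ range n, g k • Φ (τ k) - ν.real V • Φ t‖ ≤
      δ * ν.real V + ‖(∑ k ∈ range n, g k) • Φ t - ν.real V • Φ t‖ := by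
    intro n
    have hdev : ‖∑ k ∈ range n, g k • (Φ (τ k) - Φ t)‖ ≤ δ * ν.real V :=
      calc ‖∑ k ∈ range n, g k • (Φ (τ k) - Φ t)‖
          ≤ ∑ k ∈ range n, g k * δ := norm_sum_le_of_le _ fun k _ => by
            rw [norm_smul, Real.norm_of_nonneg measureReal_nonneg, ← dist_eq_norm]
            exact mul_le_mul_of_nonneg_left (hτosc k) measureReal_nonneg
        _ = (∑ k ∈ range n, g k) * δ := (sum_mul _ _ _).symm
        _ ≤ ν.real V * δ := by
            gcongr
            exact sum_le_hasSum _ (fun _ _ => measureReal_nonneg) hsum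
        _ = δ * ν.real V := mul_comm _ _
    calc ‖∑ k ∈ range n, g k • Φ (τ k) - ν.real V • Φ t‖
        = ‖∑ k ∈ range n, g k • (Φ (τ k) - Φ t) +
            ((∑ k ∈ range n, g k) • Φ t - ν.real V • Φ t)‖ := by
          simp only [smul_sub, sum_sub_distrib, sum_smul, sub_add_sub_cancel]
      _ ≤ _ := (norm_add_le _ _).trans (by gcongr)
  have hb := tendsto_iff_norm_sub_tendsto_zero.1 (hsum.tendsto_sum_nat.smul_const (Φ t))
  have := norm_sub_le_of_limsup_lt (hP P (fun n => ⟨n, subset_rfl⟩) τ hτ) hb hS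
  linarith

lemma HasBi1On.norm_smul_smul_sub_smul_le [NormedAddCommGroup X] [NormedSpace ℝ X]
    [MeasurableSpace Ω] {ν : Measure Ω} [IsFiniteMeasure ν] {Φ : Ω → X} {V : Set Ω} {I : X}
    (hI : HasBi1On ν Φ V I) {t : Ω} {δ : ℝ} (hδ : 0 ≤ δ)
    (hosc : ∀ s ∈ V, dist (Φ s) (Φ t) ≤ δ) {a K : ℝ} (ha : V.Nonempty → |a| ≤ K) :
    ‖ν.real V • (a • Φ t) - a • I‖ ≤ K * (δ * ν.real V) := by
  have key := hI.norm_sub_smul_le hδ hosc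
  rw [smul_comm, ← smul_sub, norm_smul, Real.norm_eq_abs, norm_sub_rev]
  rcases V.eq_empty_or_nonempty with rfl | hV
  · simp_all
  · exact mul_le_mul (ha hV) key (norm_nonneg _) ((abs_nonneg a).trans (ha hV))

lemma sum_le_two_mul_of_sum_row_le {f : ℕ × ℕ → ℝ} {C : ℝ} (hf : ∀ p, 0 ≤ f p)
    (hrow : ∀ n (B : Finset ℕ), ∑ j ∈ B, f (n, j) ≤ C * (1 / 2) ^ n) (s : Finset (ℕ × ℕ)) :
    ∑ p ∈ s, f p ≤ 2 * C := by
  have hC : 0 ≤ C := by simpa using hrow 0 ∅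
  calc ∑ p ∈ s, f p ≤ ∑ p ∈ s.image Prod.fst ×ˢ s.image Prod.snd, f p :=
        sum_le_sum_of_subset_of_nonneg subset_product fun p _ _ => hf p
    _ = ∑ n ∈ s.image Prod.fst, ∑ j ∈ s.image Prod.snd, f (n, j) := sum_product _ _ _
    _ ≤ ∑ n ∈ s.image Prod.fst, C * (1 / 2) ^ n := sum_le_sum fun n _ => hrow n _
    _ ≤ ∑' n, C * (1 / 2 : ℝ) ^ n :=
        (summable_geometric_two.mul_left C).sum_le_tsum _ fun _ _ => by positivity
    _ = 2 * C := by rw [tsum_mul_left, tsum_geometric_two, mul_comm]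

lemma CountablePartitionOn.Finer.sum_norm_smul_smul_sub_smul_le [NormedAddCommGroup X]
    [NormedSpace ℝ X] [MeasurableSpace Ω] {ν : Measure Ω} [IsFiniteMeasure ν] {Φ : Ω → X}
    {N : Set Ω → X} (hN : ∀ A : Set Ω, MeasurableSet A → HasBi1On ν Φ A (N A)) {G : Set Ω}
    {P P' : CountablePartitionOn G} (hfiner : P'.Finer P) {δ : ℝ} (hδ : 0 ≤ δ)
    (hP : ∀ k, ∀ a ∈ P.piece k, ∀ b ∈ P.piece k, dist (Φ a) (Φ b) ≤ δ)
    {t : ℕ → Ω} (ht : P'.IsTagging t) {φ : Ω → ℝ} {K : ℝ} (hK : ∀ ω ∈ G, |φ ω| ≤ K)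
    (B : Finset ℕ) :
    ∑ j ∈ B, ‖ν.real (P'.piece j) • (φ (t j) • Φ (t j)) - φ (t j) • N (P'.piece j)‖ ≤
      K * δ * ν.real G := by
  have hpiece : ∀ j, ‖ν.real (P'.piece j) • (φ (t j) • Φ (t j)) - φ (t j) • N (P'.piece j)‖ ≤
      K * δ * ν.real (P'.piece j) := fun j => by
    obtain ⟨m, hjm⟩ := hfiner j
    rw [mul_assoc]
    exact (hN _ (P'.measurable j)).norm_smul_smul_sub_smul_le hδ
      (fun s hs => hP m s (hjm hs) _ (hjm (ht j ⟨s, hs⟩)))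
      fun hV => hK _ (P'.piece_subset j (ht j hV))
  calc _ ≤ ∑ j ∈ B, K * δ * ν.real (P'.piece j) := sum_le_sum fun j _ => hpiece j
    _ = K * δ * ∑ j ∈ B, ν.real (P'.piece j) := (mul_sum _ _ _).symm
    _ ≤ K * δ * ν.real G := by
        rcases G.eq_empty_or_nonempty with rfl | ⟨ω, hω⟩
        · simp [subset_empty_iff.1 (P'.piece_subset _)]
        have := (abs_nonneg _).trans (hK ω hω)
        gcongr
        exact sum_le_hasSum _ (fun _ _ => measureReal_nonneg) (P'.hasSum_measureReal ν)

theorem bi1_double_sum_estimate_general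
    [MeasurableSpace Ω] [NormedAddCommGroup X] [NormedSpace ℝ X]
    (ν : Measure Ω) [IsFiniteMeasure ν]
    (φ : Ω → ℝ) (hφ : Measurable φ)
    (Φ : Ω → X) (hΦm : StronglyMeasurable Φ)
    (N : Set Ω → X) (hN : ∀ A : Set Ω, MeasurableSet A → HasBi1On ν Φ A (N A))
    (G : ℕ → Set Ω)
    (hG : ∀ n, G n = {ω : Ω | (n : ℝ) - 1 ≤ |φ ω| ∧ |φ ω| ≤ (n : ℝ)})
    (ε : ℝ) (hε : 0 < ε) :
    ∃ P : ∀ n : ℕ, CountablePartitionOn (G (n + 1)),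
      ∀ P' : ∀ n : ℕ, CountablePartitionOn (G (n + 1)),
        (∀ n, (P' n).Finer (P n)) →
        ∀ t : ℕ → ℕ → Ω, (∀ n, (P' n).IsTagging (t n)) →
          ∀ s : Finset (ℕ × ℕ),
            ∑ p ∈ s,
              ‖(ν ((P' p.1).piece p.2)).toReal • (φ (t p.1 p.2) • Φ (t p.1 p.2)) -
                φ (t p.1 p.2) • N ((P' p.1).piece p.2)‖ ≤ 2 * ε := by
  set M := ν.real univ
  set δ : ℕ → ℝ := fun n => ε * (1 / 2) ^ n / ((n + 1) * (M + 1))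
  have hδ : ∀ n, 0 < δ n := fun n => by positivity
  have hδM : ∀ n : ℕ, (n + 1) * δ n * M ≤ ε * (1 / 2) ^ n := fun n => by
    have hM : M / (M + 1) ≤ 1 := (div_le_one (by positivity)).2 (by linarith)
    calc (n + 1) * δ n * M = ε * (1 / 2) ^ n * (M / (M + 1)) := by
          simp only [δ]; field_simp
      _ ≤ ε * (1 / 2) ^ n := mul_le_of_le_one_right (by positivity) hM
  have hGm : ∀ n, MeasurableSet (G n) := fun n => hG n ▸ hφ.abs measurableSet_Icc
  have hφG : ∀ n : ℕ, ∀ ω ∈ G (n + 1), |φ ω| ≤ n + 1 := fun n ω hω => by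
    rw [hG] at hω
    exact_mod_cast hω.2
  choose P hP using fun n => CountablePartitionOn.exists_forall_dist_le hΦm (hGm (n + 1)) (hδ n)
  refine ⟨P, fun P' hfiner t ht => sum_le_two_mul_of_sum_row_le (fun _ => norm_nonneg _) ?_⟩
  intro n B
  calc _ ≤ (n + 1) * δ n * ν.real (G (n + 1)) :=
        (hfiner n).sum_norm_smul_smul_sub_smul_le hN (hδ n).le (hP n) (ht n) (hφG n) B
    _ ≤ (n + 1) * δ n * M := by gcongr; exact measureReal_mono (subset_univ _)
    _ ≤ ε * (1 / 2) ^ n := hδM n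

/-- Lemma 2.6 of the paper. Let `φ` be measurable, `Φ` strongly measurable
and first-type Birkhoff integrable w.r.t. `ν` on every measurable set, with indefinite
integral `N`. Put `G n := {ω : n-1 ≤ |φ ω| ≤ n}` for `n ≥ 1`.  Then for every `ε > 0`
there are countable measurable partitions `P n` of `G (n+1)` such that for all finer
partitions `P' n` and all choices of tags `t n j ∈ (P' n).piece j` one has
`∑_{n,j} ‖φ(t n j) • Φ(t n j) ν(V n j) − φ(t n j) • N(V n j)‖ ≤ 2ε`
(stated via arbitrary finite partial sums of the double series). -/
theorem bi1_double_sum_estimate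
    [MeasurableSpace Ω] [NormedAddCommGroup X] [NormedSpace ℝ X]
    (ν : Measure Ω) [IsFiniteMeasure ν]
    (φ : Ω → ℝ) (hφ : Measurable φ)
    (Φ : Ω → X) (hΦm : StronglyMeasurable Φ)
    (N : Set Ω → X) (hN : ∀ A : Set Ω, MeasurableSet A → HasBi1On ν Φ A (N A))
    (hΦi : ∃ I, HasBi1On ν Φ Set.univ I)
    (G : ℕ → Set Ω)
    (hG : ∀ n, G n = {ω : Ω | (n : ℝ) - 1 ≤ |φ ω| ∧ |φ ω| ≤ (n : ℝ)})
    (ε : ℝ) (hε : 0 < ε) :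
    ∃ P : ∀ n : ℕ, CountablePartitionOn (G (n + 1)),
      ∀ P' : ∀ n : ℕ, CountablePartitionOn (G (n + 1)),
        (∀ n, (P' n).Finer (P n)) →
        ∀ t : ℕ → ℕ → Ω, (∀ n, (P' n).IsTagging (t n)) →
          ∀ s : Finset (ℕ × ℕ),
            ∑ p ∈ s,
              ‖(ν ((P' p.1).piece p.2)).toReal • (φ (t p.1 p.2) • Φ (t p.1 p.2)) -
                φ (t p.1 p.2) • N ((P' p.1).piece p.2)‖ ≤ 2 * ε :=
  bi1_double_sum_estimate_general ν φ hφ Φ hΦm N hN G hG ε hε
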